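/- Let P(s) = \sum_{k=1}^m a_k k^{-s} with a_1 \neq 0, r \in \mathbb{R}, and suppose P has at least one zero with real part strictly greater than r. Then \liminf_{n \to \infty} d_{n,r}^2 \log n = \infty, i.e., d_{n,r} does not tend to 0; in fact d_{n,r} is bounded below by a positive constant independent of n. -/

import Mathlib

open Finset Filter Topology MeasureTheory

/-- `κ_r(x) = ∑_{1 ≤ k ≤ x} a_k k^{-(r-1/2)}` -/
noncomputable def kappa (a : ℕ → ℂ) (r : ℝ) (x : ℝ) : ℂ :=
  ∑ k ∈ Finset.Icc 1 ⌊x⌋₊, a k / (k : ℂ) ^ ((r : ℂ) - 1/2)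

/-- The square of the Báez-Duarte distance `d_{n,r}`: the squared `L²(0,∞)` distance from the
indicator of `(0,1)` to the span of `x ↦ κ_r(1/(kx))`, `k = 1, …, n`. -/
noncomputable def baezDuarteDistSq (a : ℕ → ℂ) (r : ℝ) (n : ℕ) : ℝ :=
  ⨅ b : Fin n → ℂ, ∫ x in Set.Ioi (0 : ℝ),
    ‖Set.indicator (Set.Ioo (0 : ℝ) 1) (fun _ => (1 : ℂ)) x -
      ∑ k : Fin n, b k * kappa a r (1 / (((k : ℕ) + 1 : ℕ) * x))‖ ^ 2

/-!
Put `s = ρ - r + 1/2`, so `Re s = δ + 1/2 > 1/2`. On `(0,1)`, `x ↦ κ_r(1/(kx))` is the finite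
step function `∑_j a_j j^{1/2-r} 1_{x ≤ 1/(kj)}`, so its Mellin transform
`∫₀¹ κ_r(1/(kx)) x^{s-1} dx = k^{-s} P(ρ) / s` vanishes. Hence every approximant
`f = 1_{(0,1)} - ∑ b_k κ_r(1/(kx))` satisfies `∫₀¹ f(x) x^{s-1} dx = 1/s`. As `f = 0` on
`(1,∞)` and `∫₀¹ |x^{s-1}|² dx = 1/(2δ)`, Cauchy–Schwarz gives `‖f‖₂² ≥ 2δ/|s|²` for all `n`.
-/
lemma sq_norm_integral_mul_le {α : Type*} [MeasurableSpace α] {μ : Measure α} {f g : α → ℂ}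
    (hf : MemLp f 2 μ) (hg : MemLp g 2 μ) :
    ‖∫ x, f x * g x ∂μ‖ ^ 2 ≤ (∫ x, ‖f x‖ ^ 2 ∂μ) * ∫ x, ‖g x‖ ^ 2 ∂μ := by
  have hHolder := integral_mul_norm_le_Lp_mul_Lq Real.HolderConjugate.two_two
    (by simpa using hf) (by simpa using hg)
  simp only [Real.rpow_two, ← Real.sqrt_eq_rpow] at hHolder
  have hA : 0 ≤ ∫ x, ‖f x‖ ^ 2 ∂μ := integral_nonneg fun x => by positivity
  have hB : 0 ≤ ∫ x, ‖g x‖ ^ 2 ∂μ := integral_nonneg fun x => by positivity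
  calc ‖∫ x, f x * g x ∂μ‖ ^ 2 ≤ (∫ x, ‖f x‖ * ‖g x‖ ∂μ) ^ 2 := by
        gcongr
        simpa only [norm_mul] using norm_integral_le_integral_norm (fun x => f x * g x)
    _ ≤ (√(∫ x, ‖f x‖ ^ 2 ∂μ) * √(∫ x, ‖g x‖ ^ 2 ∂μ)) ^ 2 := by gcongr
    _ = (∫ x, ‖f x‖ ^ 2 ∂μ) * ∫ x, ‖g x‖ ^ 2 ∂μ := by
        rw [mul_pow, Real.sq_sqrt hA, Real.sq_sqrt hB]

lemma integral_Ioc_cpow_sub_one {s : ℂ} (hs : 0 < s.re) {t : ℝ} (ht : 0 ≤ t) :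
    ∫ x in Set.Ioc 0 t, (x : ℂ) ^ (s - 1) = (t : ℂ) ^ s / s := by
  have hs0 : s ≠ 0 := by rintro rfl; simp at hs
  rw [← intervalIntegral.integral_of_le ht,
    integral_cpow (Or.inl (by simpa [Complex.sub_re] using hs)), sub_add_cancel,
    Complex.ofReal_zero, Complex.zero_cpow hs0, sub_zero]

lemma integral_Ioo_indicator_Iic_cpow {s : ℂ} (hs : 0 < s.re) {t : ℝ} (ht : 0 ≤ t)
    (ht1 : t ≤ 1) :
    ∫ x in Set.Ioo 0 1, (Set.Iic t).indicator (fun x : ℝ => (x : ℂ) ^ (s - 1)) x =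
      (t : ℂ) ^ s / s := by
  have hIoc : Set.Ioc (0 : ℝ) 1 ∩ Set.Iic t = Set.Ioc 0 t := by
    rw [Set.Ioc_inter_Iic, min_eq_right ht1]
  rw [setIntegral_indicator measurableSet_Iic, ← integral_Ioc_cpow_sub_one hs ht, ← hIoc]
  exact setIntegral_congr_set (Ioo_ae_eq_Ioc.inter (ae_eq_refl _))

lemma integrableOn_Ioo_cpow_sub_one {s : ℂ} (hs : 0 < s.re) :
    IntegrableOn (fun x : ℝ => (x : ℂ) ^ (s - 1)) (Set.Ioo 0 1) := by
  have h := intervalIntegral.intervalIntegrable_cpow' (a := 0) (b := 1) (r := s - 1)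
    (by simpa [Complex.sub_re] using hs)
  exact ((intervalIntegrable_iff_integrableOn_Ioc_of_le zero_le_one).1 h).mono_set
    Set.Ioo_subset_Ioc_self

lemma norm_cpow_sub_one_sq {x : ℝ} (hx : 0 < x) (s : ℂ) :
    ‖(x : ℂ) ^ (s - 1)‖ ^ 2 = x ^ (2 * s.re - 2) := by
  rw [Complex.norm_cpow_eq_rpow_re_of_pos hx, ← Real.rpow_natCast, ← Real.rpow_mul hx.le,
    Complex.sub_re, Complex.one_re]
  ring_nf

lemma integrableOn_Ioo_norm_cpow_sub_one_sq {s : ℂ} (hs : 1/2 < s.re) :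
    IntegrableOn (fun x : ℝ => ‖(x : ℂ) ^ (s - 1)‖ ^ 2) (Set.Ioo 0 1) := by
  have h := intervalIntegral.intervalIntegrable_rpow' (a := 0) (b := 1) (r := 2 * s.re - 2)
    (by linarith)
  refine (((intervalIntegrable_iff_integrableOn_Ioc_of_le zero_le_one).1 h).mono_set
    Set.Ioo_subset_Ioc_self).congr_fun (fun x hx => (norm_cpow_sub_one_sq hx.1 s).symm)
    measurableSet_Ioo

lemma integral_Ioo_norm_cpow_sub_one_sq {s : ℂ} (hs : 1/2 < s.re) :
    ∫ x in Set.Ioo (0 : ℝ) 1, ‖(x : ℂ) ^ (s - 1)‖ ^ 2 = 1 / (2 * s.re - 1) := by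
  rw [setIntegral_congr_fun measurableSet_Ioo fun x hx => norm_cpow_sub_one_sq hx.1 s,
    ← integral_Ioc_eq_integral_Ioo, ← intervalIntegral.integral_of_le zero_le_one,
    integral_rpow (Or.inl (by linarith)), Real.one_rpow, Real.zero_rpow (by linarith), sub_zero]
  ring

lemma memLp_two_Ioo_cpow_sub_one {s : ℂ} (hs : 1/2 < s.re) :
    MemLp (fun x : ℝ => (x : ℂ) ^ (s - 1)) 2 (volume.restrict (Set.Ioo 0 1)) :=
  (memLp_two_iff_integrable_sq_norm
    (Complex.measurable_ofReal.pow_const _).aestronglyMeasurable).2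
    (integrableOn_Ioo_norm_cpow_sub_one_sq hs)

lemma kappa_eq_zero_of_lt_one (a : ℕ → ℂ) (r : ℝ) {y : ℝ} (hy : y < 1) : kappa a r y = 0 := by
  simp [kappa, Nat.floor_eq_zero.2 hy]

lemma measurable_kappa (a : ℕ → ℂ) (r : ℝ) : Measurable (kappa a r) :=
  measurable_from_top.comp (g := fun N : ℕ => ∑ k ∈ Icc 1 N, a k / (k : ℂ) ^ ((r : ℂ) - 1/2))
    Nat.measurable_floor

section kappa

variable {m : ℕ} {a : ℕ → ℂ}

lemma kappa_eq_sum_indicator (ha : ∀ k, m < k → a k = 0) (r y : ℝ) :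
    kappa a r y = ∑ j ∈ Icc 1 m,
      (Set.Ici (j : ℝ)).indicator (fun _ => a j / (j : ℂ) ^ ((r : ℂ) - 1/2)) y := by
  simp only [Set.indicator_apply, Set.mem_Ici]
  rw [← Finset.sum_filter, kappa]
  refine (Finset.sum_subset (fun j hj => ?_) fun j hj hj' => ?_).symm
  · simp only [Finset.mem_filter, Finset.mem_Icc] at hj ⊢
    exact ⟨hj.1.1, (Nat.le_floor_iff' (by omega)).2 hj.2⟩
  · simp only [Finset.mem_filter, Finset.mem_Icc, not_and] at hj hj'
    have hjy : (j : ℝ) ≤ y := (Nat.le_floor_iff' (by omega)).1 hj.2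
    rw [ha j (lt_of_not_ge fun hjm => hj' ⟨hj.1, hjm⟩ hjy), zero_div]

lemma norm_kappa_le (ha : ∀ k, m < k → a k = 0) (r y : ℝ) :
    ‖kappa a r y‖ ≤ ∑ j ∈ Icc 1 m, ‖a j / (j : ℂ) ^ ((r : ℂ) - 1/2)‖ := by
  rw [kappa_eq_sum_indicator ha]
  exact (norm_sum_le _ _).trans (sum_le_sum fun j _ => norm_indicator_le_norm_self _ _)

lemma memLp_kappa_comp {α : Type*} [MeasurableSpace α] {μ : Measure α} [IsFiniteMeasure μ]
    (ha : ∀ k, m < k → a k = 0) (r : ℝ) {φ : α → ℝ} (hφ : Measurable φ)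
    (p : ENNReal) : MemLp (fun x => kappa a r (φ x)) p μ :=
  MemLp.of_bound ((measurable_kappa a r).comp hφ).aestronglyMeasurable _
    (ae_of_all _ fun x => norm_kappa_le ha r (φ x))

lemma kappa_one_div_mul_eq_sum_indicator (ha : ∀ k, m < k → a k = 0) (r : ℝ)
    {K x : ℝ} (hK : 0 < K) (hx : 0 < x) (h : ℝ → ℂ) :
    kappa a r (1 / (K * x)) * h x = ∑ j ∈ Icc 1 m,
      a j / (j : ℂ) ^ ((r : ℂ) - 1/2) * (Set.Iic (1 / (K * j))).indicator h x := by
  rw [kappa_eq_sum_indicator ha, Finset.sum_mul]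
  refine sum_congr rfl fun j hj => ?_
  have hj : (0 : ℝ) < j := by exact_mod_cast (Finset.mem_Icc.1 hj).1
  have hiff : (j : ℝ) ≤ 1 / (K * x) ↔ x ≤ 1 / (K * j) := by
    rw [le_div_iff₀ (by positivity), le_div_iff₀ (by positivity), mul_left_comm, mul_comm x,
      ← mul_assoc]
  simp only [Set.indicator_apply, Set.mem_Ici, Set.mem_Iic, hiff]
  split_ifs <;> simp

lemma integrableOn_kappa_one_div_mul_cpow (ha : ∀ k, m < k → a k = 0) (r : ℝ)
    {s : ℂ} (hs : 0 < s.re) {K : ℝ} (hK : 0 < K) :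
    IntegrableOn (fun x : ℝ => kappa a r (1 / (K * x)) * (x : ℂ) ^ (s - 1)) (Set.Ioo 0 1) := by
  refine IntegrableOn.congr_fun ?_ (fun x hx =>
    (kappa_one_div_mul_eq_sum_indicator ha r hK hx.1 fun x : ℝ => (x : ℂ) ^ (s - 1)).symm)
    measurableSet_Ioo
  exact integrable_finsetSum _ fun j _ =>
    ((integrableOn_Ioo_cpow_sub_one hs).indicator measurableSet_Iic).const_mul _

lemma integral_kappa_one_div_mul_cpow (ha : ∀ k, m < k → a k = 0) (r : ℝ)
    {s : ℂ} (hs : 0 < s.re) {K : ℝ} (hK : 1 ≤ K) :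
    ∫ x in Set.Ioo 0 1, kappa a r (1 / (K * x)) * (x : ℂ) ^ (s - 1) =
      ((K : ℂ) ^ s)⁻¹ / s * ∑ j ∈ Icc 1 m, a j * (j : ℂ) ^ (-(s + r - 1/2)) := by
  rw [setIntegral_congr_fun measurableSet_Ioo fun x hx =>
      kappa_one_div_mul_eq_sum_indicator ha r (by linarith) hx.1 fun x : ℝ => (x : ℂ) ^ (s - 1),
    integral_finsetSum _ fun j _ =>
      ((integrableOn_Ioo_cpow_sub_one hs).indicator measurableSet_Iic).const_mul _,
    Finset.mul_sum]
  refine sum_congr rfl fun j hjm => ?_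
  have hj1 : 1 ≤ j := (Finset.mem_Icc.1 hjm).1
  have hj : (1 : ℝ) ≤ j := by exact_mod_cast hj1
  have hKj : 1 ≤ K * j := one_le_mul_of_one_le_of_one_le hK hj
  rw [integral_const_mul, integral_Ioo_indicator_Iic_cpow hs (by positivity)
    (div_le_one_of_le₀ hKj (by positivity))]
  have hpow : ((1 / (K * j) : ℝ) : ℂ) ^ s = ((K : ℂ) ^ s)⁻¹ * ((j : ℂ) ^ s)⁻¹ := by
    rw [one_div, Complex.ofReal_inv, Complex.inv_cpow_ofReal_nonneg (by positivity),
      Complex.ofReal_mul, Complex.mul_cpow_ofReal_nonneg (by positivity) (by positivity), mul_inv,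
      Complex.ofReal_natCast]
  have hjpow :
      (j : ℂ) ^ (-(s + r - 1/2)) = ((j : ℂ) ^ ((r : ℂ) - 1/2))⁻¹ * ((j : ℂ) ^ s)⁻¹ := by
    rw [Complex.cpow_neg, ← mul_inv,
      ← Complex.cpow_add _ _ (Nat.cast_ne_zero.2 (Nat.one_le_iff_ne_zero.1 hj1))]
    ring_nf
  rw [hpow, hjpow]
  ring

end kappa

noncomputable def baezDuarteResidual (a : ℕ → ℂ) (r : ℝ) {n : ℕ} (b : Fin n → ℂ) (x : ℝ) : ℂ :=
  Set.indicator (Set.Ioo (0 : ℝ) 1) (fun _ => (1 : ℂ)) x -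
    ∑ k : Fin n, b k * kappa a r (1 / (((k : ℕ) + 1 : ℕ) * x))

section baezDuarteResidual

variable {m n : ℕ} {a : ℕ → ℂ} {r : ℝ}

variable (a r) in
lemma baezDuarteResidual_eq_zero_of_one_lt (b : Fin n → ℂ) {x : ℝ}
    (hx : 1 < x) : baezDuarteResidual a r b x = 0 := by
  have hκ (k : Fin n) : kappa a r (1 / (((k : ℕ) + 1 : ℕ) * x)) = 0 :=
    kappa_eq_zero_of_lt_one a r <| (div_lt_one (by positivity)).2 <|
      one_lt_mul_of_le_of_lt (by simp) hx
  rw [baezDuarteResidual, Set.indicator_of_notMem fun hx' => hx'.2.not_gt hx,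
    Finset.sum_eq_zero fun k _ => by rw [hκ k, mul_zero], sub_zero]

lemma memLp_baezDuarteResidual {μ : Measure ℝ} [IsFiniteMeasure μ] (ha : ∀ k, m < k → a k = 0)
    (b : Fin n → ℂ) (p : ENNReal) : MemLp (baezDuarteResidual a r b) p μ := by
  have hsum : MemLp (fun x => ∑ k : Fin n, b k * kappa a r (1 / (((k : ℕ) + 1 : ℕ) * x))) p μ :=
    memLp_finsetSum _ fun k _ => (memLp_kappa_comp ha r (by fun_prop) p).const_mul (b k)
  exact ((memLp_const (1 : ℂ)).indicator measurableSet_Ioo).sub hsum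

lemma integral_baezDuarteResidual_mul_cpow (ha : ∀ k, m < k → a k = 0) {s : ℂ} (hs : 0 < s.re)
    (hP : ∑ j ∈ Icc 1 m, a j * (j : ℂ) ^ (-(s + r - 1/2)) = 0) (b : Fin n → ℂ) :
    ∫ x in Set.Ioo 0 1, baezDuarteResidual a r b x * (x : ℂ) ^ (s - 1) = 1 / s := by
  have hK (k : Fin n) : (1 : ℝ) ≤ ((k : ℕ) + 1 : ℕ) := by simp
  have hint (k : Fin n) : IntegrableOn (fun x : ℝ =>
      b k * (kappa a r (1 / (((k : ℕ) + 1 : ℕ) * x)) * (x : ℂ) ^ (s - 1))) (Set.Ioo 0 1) :=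
    (integrableOn_kappa_one_div_mul_cpow ha r hs (by linarith [hK k])).const_mul _
  have hpt : Set.EqOn (fun x => baezDuarteResidual a r b x * (x : ℂ) ^ (s - 1))
      (fun x : ℝ => (x : ℂ) ^ (s - 1) -
        ∑ k : Fin n, b k * (kappa a r (1 / (((k : ℕ) + 1 : ℕ) * x)) * (x : ℂ) ^ (s - 1)))
      (Set.Ioo 0 1) := fun x hx => by
    simp only [baezDuarteResidual, Set.indicator_of_mem hx, sub_mul, one_mul, Finset.sum_mul,
      mul_assoc]
  rw [setIntegral_congr_fun measurableSet_Ioo hpt,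
    integral_sub (integrableOn_Ioo_cpow_sub_one hs) (integrable_finsetSum _ fun k _ => hint k),
    integral_finsetSum _ fun k _ => hint k]
  simp only [integral_const_mul, integral_kappa_one_div_mul_cpow ha r hs (hK _), hP, mul_zero,
    Finset.sum_const_zero, sub_zero, ← integral_Ioc_eq_integral_Ioo,
    integral_Ioc_cpow_sub_one hs zero_le_one, Complex.ofReal_one, Complex.one_cpow]

variable (a r) in
lemma integral_Ioi_norm_baezDuarteResidual_sq (b : Fin n → ℂ) :
    ∫ x in Set.Ioi 0, ‖baezDuarteResidual a r b x‖ ^ 2 =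
      ∫ x in Set.Ioo 0 1, ‖baezDuarteResidual a r b x‖ ^ 2 := by
  rw [setIntegral_eq_of_subset_of_forall_sdiff_eq_zero measurableSet_Ioi Set.Ioc_subset_Ioi_self
    fun x hx => ?_, integral_Ioc_eq_integral_Ioo]
  rw [baezDuarteResidual_eq_zero_of_one_lt a r b (lt_of_not_ge fun h => hx.2 ⟨hx.1, h⟩),
    norm_zero, sq, zero_mul]

lemma le_integral_norm_baezDuarteResidual_sq (ha : ∀ k, m < k → a k = 0) {s : ℂ}
    (hs : 1/2 < s.re) (hP : ∑ j ∈ Icc 1 m, a j * (j : ℂ) ^ (-(s + r - 1/2)) = 0)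
    (b : Fin n → ℂ) :
    (2 * s.re - 1) / ‖s‖ ^ 2 ≤ ∫ x in Set.Ioi 0, ‖baezDuarteResidual a r b x‖ ^ 2 := by
  have hCS := sq_norm_integral_mul_le (memLp_baezDuarteResidual (r := r) ha b 2)
    (memLp_two_Ioo_cpow_sub_one hs)
  have hs0 : 0 < ‖s‖ := (by linarith : (0 : ℝ) < s.re).trans_le (Complex.re_le_norm s)
  rw [integral_baezDuarteResidual_mul_cpow ha (by linarith) hP,
    integral_Ioo_norm_cpow_sub_one_sq hs, norm_div, norm_one, div_pow, one_pow, mul_one_div,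
    div_le_div_iff₀ (by positivity) (by linarith), one_mul] at hCS
  rw [integral_Ioi_norm_baezDuarteResidual_sq, div_le_iff₀ (by positivity)]
  exact hCS

end baezDuarteResidual

lemma liminf_mul_log_eq_top {u : ℕ → ℝ} {c : ℝ} (hc : 0 < c) (hu : ∀ n, c ≤ u n) :
    liminf (fun n : ℕ => ((u n * Real.log n : ℝ) : EReal)) atTop = ⊤ := by
  refine (EReal.tendsto_coe_nhds_top_iff.2 <| tendsto_atTop_mono
    (fun n => mul_le_mul_of_nonneg_right (hu n) (Real.log_natCast_nonneg n)) ?_).liminf_eq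
  exact (Real.tendsto_log_atTop.comp tendsto_natCast_atTop_atTop).const_mul_atTop hc

theorem baezDuarte_dist_not_tendsto_zero_of_zero_general (m : ℕ) (a : ℕ → ℂ)
    (ha : ∀ k, m < k → a k = 0) (r : ℝ)
    (hρ : ∃ ρ : ℂ, (∑ k ∈ Finset.Icc 1 m, a k * (k : ℂ) ^ (-ρ)) = 0 ∧ r < ρ.re) :
    Filter.liminf
        (fun n : ℕ => ((baezDuarteDistSq a r n * Real.log n : ℝ) : EReal)) atTop = ⊤ ∧
      ∃ c > (0 : ℝ), ∀ n : ℕ, c ≤ Real.sqrt (baezDuarteDistSq a r n) := by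
  obtain ⟨ρ, hρ0, hρr⟩ := hρ
  set s : ℂ := ρ - r + 1/2 with hs_def
  have hs : 1/2 < s.re := by
    have hre : s.re = ρ.re - r + 1/2 := by simp [hs_def]
    linarith
  have hP : ∑ j ∈ Icc 1 m, a j * (j : ℂ) ^ (-(s + r - 1/2)) = 0 := by
    rwa [show s + r - 1/2 = ρ by rw [hs_def]; ring]
  set c := (2 * s.re - 1) / ‖s‖ ^ 2
  have hc : 0 < c := div_pos (by linarith) <| pow_pos
    ((by linarith : (0 : ℝ) < s.re).trans_le (Complex.re_le_norm s)) 2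
  have hlow (n : ℕ) : c ≤ baezDuarteDistSq a r n :=
    le_ciInf (le_integral_norm_baezDuarteResidual_sq ha hs hP)
  exact ⟨liminf_mul_log_eq_top hc hlow, √c, Real.sqrt_pos.2 hc,
    fun n => Real.sqrt_le_sqrt (hlow n)⟩

theorem baezDuarte_dist_not_tendsto_zero_of_zero (m : ℕ) (hm : 1 ≤ m) (a : ℕ → ℂ)
    (ha1 : a 1 ≠ 0) (ha : ∀ k, m < k → a k = 0) (r : ℝ)
    (hρ : ∃ ρ : ℂ, (∑ k ∈ Finset.Icc 1 m, a k * (k : ℂ) ^ (-ρ)) = 0 ∧ r < ρ.re) :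
    Filter.liminf
        (fun n : ℕ => ((baezDuarteDistSq a r n * Real.log n : ℝ) : EReal)) atTop = ⊤ ∧
      ∃ c > (0 : ℝ), ∀ n : ℕ, c ≤ Real.sqrt (baezDuarteDistSq a r n) :=
  baezDuarte_dist_not_tendsto_zero_of_zero_general m a ha r hρ
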